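/- arXiv:2305.15600 — 2 statements merged into one kernel-verified Lean document; each statement's English description precedes it below -/
import Mathlib

section
/- If A → B is a weak map of matroids, then for every k, the number of chains of length k in the proper part of the lattice of flats of A is at least the number of chains of length k in the proper part of the lattice of flats of B. -/
/-!
Given a chain `F₁ ⊂ ⋯ ⊂ F_k` of proper flats of `B`, choose nested `B`-bases `J₁ ⊆ ⋯ ⊆ J_k`.
Each `J_i` is `A`-independent, so an element of `A.closure J_i` outside `J_i` makes `J_i`
`A`-dependent, hence `B`-dependent; thus `A.closure J_i ⊆ B.closure J_i` and
`B.closure (A.closure J_i) = F_i`. The flats `A.closure J_i` therefore form a chain of `k` proper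
flats of `A` from which `B.closure` recovers the original chain, so `D ↦ B.closure '' D` maps the
`k`-chains of `A` onto those of `B`.
-/

open Set

/-- The rank of a set `X` in a matroid `M`. -/
noncomputable def mrk {α : Type*} (M : Matroid α) (X : Set α) : ℕ :=
  sSup {n | ∃ I, M.Indep I ∧ I ⊆ X ∧ I.ncard = n}

/-- A chain of flats of `M` lying strictly between the minimal flat and the
ground set, totally ordered by inclusion. -/
def IsFlatChain {α : Type*} (M : Matroid α) (C : Set (Set α)) : Prop :=
  (∀ F ∈ C, M.IsFlat F ∧ F ≠ M.closure ∅ ∧ F ≠ M.E) ∧ IsChain (· ⊆ ·) C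

/-- `f_k(M)`: the number of chains consisting of `k` flats in the proper part
of the lattice of flats of `M`. -/
noncomputable def fNum {α : Type*} (M : Matroid α) (k : ℕ) : ℕ :=
  {C : Set (Set α) | IsFlatChain M C ∧ C.ncard = k}.ncard

section Chain

variable {β γ : Type*} [PartialOrder β] [Preorder γ] {s : Set β}

theorem IsChain.exists_isLeast_of_finite (hs : IsChain (· ≤ ·) s) (hfin : s.Finite)
    (hne : s.Nonempty) : ∃ m, IsLeast s m := by
  obtain ⟨m, hm⟩ := hfin.exists_minimal hne
  refine ⟨m, hm.prop, fun x hx => ?_⟩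
  rcases eq_or_ne m x with rfl | hmx
  · exact le_rfl
  · exact (hs.total hm.prop hx).resolve_right fun hxm => hmx (hm.eq_of_ge hx hxm)

theorem IsChain.image_of_monotoneOn {f : β → γ} (hs : IsChain (· ≤ ·) s) (hf : MonotoneOn f s) :
    IsChain (· ≤ ·) (f '' s) := by
  rintro _ ⟨x, hx, rfl⟩ _ ⟨y, hy, rfl⟩ -
  exact (hs.total hx hy).imp (hf hx hy) (hf hy hx)

end Chain

namespace Matroid

variable {α : Type*} {A B : Matroid α} {I : Set α}

theorem exists_monotoneOn_isBasis_of_isChain (M : Matroid α) {C : Set (Set α)}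
    (hfin : C.Finite) (hC : IsChain (· ⊆ ·) C) (hCE : ∀ F ∈ C, F ⊆ M.E) (hI : M.Indep I)
    (hIC : ∀ F ∈ C, I ⊆ F) :
    ∃ J : Set α → Set α, (∀ F ∈ C, M.IsBasis (J F) F ∧ I ⊆ J F) ∧ MonotoneOn J C := by
  obtain ⟨n, hcard⟩ : ∃ n, C.ncard = n := ⟨_, rfl⟩
  induction n generalizing C I with
  | zero =>
    obtain rfl := (ncard_eq_zero hfin).mp hcard
    exact ⟨id, fun _ h => h.elim, fun _ h => h.elim⟩
  | succ n ih =>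
    -- Extend `I` to a basis `J₀` of the least member `F₀`; the rest of the chain starts from `J₀`.
    obtain ⟨F₀, hF₀C, hF₀least⟩ :=
      hC.exists_isLeast_of_finite hfin (nonempty_of_ncard_ne_zero (by omega))
    obtain ⟨J₀, hJ₀, hIJ₀⟩ := hI.subset_isBasis_of_subset (hIC F₀ hF₀C) (hCE F₀ hF₀C)
    obtain ⟨J, hJ, hJmono⟩ := ih hfin.sdiff (hC.mono sdiff_subset) (fun F hF => hCE F hF.1)
      hJ₀.indep (fun F hF => hJ₀.subset.trans (hF₀least hF.1))
      (by rw [ncard_sdiff_singleton_of_mem hF₀C, hcard, Nat.add_sub_cancel])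
    classical
    refine ⟨fun F => if F = F₀ then J₀ else J F, fun F hF => ?_, fun F hF G hG hFG => ?_⟩
    · by_cases h : F = F₀
      · subst h; simpa using ⟨hJ₀, hIJ₀⟩
      · simpa [h] using ⟨(hJ F ⟨hF, h⟩).1, hIJ₀.trans (hJ F ⟨hF, h⟩).2⟩
    · by_cases hF₀ : F = F₀ <;> by_cases hG₀ : G = F₀
      · simp [hF₀, hG₀]
      · simpa [hF₀, hG₀] using (hJ G ⟨hG, hG₀⟩).2
      · exact absurd (le_antisymm (hG₀ ▸ hFG) (hF₀least hF)) hF₀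
      · simpa [hF₀, hG₀] using hJmono ⟨hF, hF₀⟩ ⟨hG, hG₀⟩ hFG

theorem Indep.closure_subset_closure_of_weakMap (hweak : ∀ I : Set α, B.Indep I → A.Indep I)
    (hE : A.E ⊆ B.E) (hI : B.Indep I) : A.closure I ⊆ B.closure I := by
  intro x hx
  obtain ⟨hxE, hxI⟩ := ((hweak I hI).mem_closure_iff').mp hx
  exact hI.mem_closure_iff'.mpr ⟨hE hxE, fun h => hxI (hweak _ h)⟩

theorem Indep.closure_closure_of_weakMap (hweak : ∀ I : Set α, B.Indep I → A.Indep I)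
    (hE : A.E ⊆ B.E) (hI : B.Indep I) : B.closure (A.closure I) = B.closure I :=
  (closure_subset_closure_of_subset_closure
      (hI.closure_subset_closure_of_weakMap hweak hE)).antisymm
    (B.closure_subset_closure (A.subset_closure I (hweak I hI).subset_ground))

end Matroid

section FlatChain

variable {α : Type*} {A B M : Matroid α} {C : Set (Set α)}

theorem IsFlatChain.finite [M.Finite] (hC : IsFlatChain M C) : C.Finite :=
  M.ground_finite.finite_subsets.subset fun F hF => (hC.1 F hF).1.subset_ground

theorem finite_setOf_isFlatChain (M : Matroid α) [M.Finite] : {C | IsFlatChain M C}.Finite :=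
  M.ground_finite.finite_subsets.finite_subsets.subset
    fun _ hC F hF => (hC.1 F hF).1.subset_ground

theorem IsFlatChain.exists_lift_of_weakMap (hE : A.E = B.E)
    (hweak : ∀ I : Set α, B.Indep I → A.Indep I) (hC : IsFlatChain B C) (hfin : C.Finite) :
    ∃ D, IsFlatChain A D ∧ D.ncard = C.ncard ∧ B.closure '' D = C := by
  obtain ⟨J, hJ, hJmono⟩ := B.exists_monotoneOn_isBasis_of_isChain hfin hC.2
    (fun F hF => (hC.1 F hF).1.subset_ground) B.empty_indep fun _ _ => empty_subset _
  have hrec : LeftInvOn B.closure (fun F => A.closure (J F)) C := fun F hF => by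
    rw [(hJ F hF).1.indep.closure_closure_of_weakMap hweak hE.subset,
      (hJ F hF).1.closure_eq_closure, (hC.1 F hF).1.closure]
  refine ⟨(fun F => A.closure (J F)) '' C, ⟨?_, ?_⟩, hrec.injOn.ncard_image, hrec.image_image⟩
  · rintro _ ⟨F, hF, rfl⟩
    refine ⟨A.isFlat_closure _, fun h => (hC.1 F hF).2.1 ?_, fun h => (hC.1 F hF).2.2 ?_⟩
    · rw [← hrec hF, h, B.empty_indep.closure_closure_of_weakMap hweak hE.subset]
    · rw [← hrec hF, h, hE, B.closure_ground]
  · exact hC.2.image_of_monotoneOn fun F hF G hG hFG => A.closure_subset_closure (hJmono hF hG hFG)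

end FlatChain

/-- If `A → B` is a weak map of matroids, then for every `k`, the
number of chains of `k` flats in the proper part of the lattice of flats of
`A` is at least the corresponding number for `B`. -/
theorem stmt8 {α : Type*} (A B : Matroid α) [A.Finite] [B.Finite]
    (hE : A.E = B.E) (hweak : ∀ I : Set α, B.Indep I → A.Indep I) :
    ∀ k : ℕ, fNum B k ≤ fNum A k := by
  intro k
  have hA : {D | IsFlatChain A D ∧ D.ncard = k}.Finite :=
    (finite_setOf_isFlatChain A).subset fun _ hD => hD.1
  have hlift : {C | IsFlatChain B C ∧ C.ncard = k} ⊆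
      (B.closure '' ·) '' {D | IsFlatChain A D ∧ D.ncard = k} := by
    rintro C ⟨hC, rfl⟩
    obtain ⟨D, hD, hDC, hCD⟩ := hC.exists_lift_of_weakMap hE hweak hC.finite
    exact ⟨D, ⟨hD, hDC⟩, hCD⟩
  calc fNum B k ≤ ((B.closure '' ·) '' {D | IsFlatChain A D ∧ D.ncard = k}).ncard :=
        ncard_le_ncard hlift (hA.image _)
    _ ≤ fNum A k := ncard_image_le hA
end

section
/- Let A → B be a rank-preserving weak map of matroids and define the auxiliary pseudo-matroid A' to consist of those flats F of A with rk_B(φ_B(F)) = rk_A(F). Then the poset F(A') ordered by inclusion is graded by rk_A: if F, F' ∈ F(A') with F ⊊ F' and rk_A(F') > rk_A(F) + 1, then there exists G ∈ F(A') with F ⊊ G ⊊ F' and rk_A(G) = rk_A(F) + 1. -/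
open Set

namespace Matroid

variable {α : Type*} {M A B : Matroid α} {I X : Set α}

lemma IsBasis'.mrk_eq_ncard [M.RankFinite] (hI : M.IsBasis' I X) : mrk M X = I.ncard := by
  refine IsGreatest.csSup_eq ⟨⟨I, hI.indep, hI.subset, rfl⟩, ?_⟩
  rintro n ⟨J, hJ, hJX, rfl⟩
  obtain ⟨K, hK, hJK⟩ := hJ.subset_isBasis'_of_subset hJX
  calc J.ncard ≤ K.ncard := ncard_le_ncard hJK hK.indep.finite
    _ = I.ncard := by rw [ncard_def, ncard_def, hK.encard_eq_eRk, hI.encard_eq_eRk]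

lemma mrk_closure (M : Matroid α) [M.RankFinite] (X : Set α) :
    mrk M (M.closure X) = mrk M X := by
  obtain ⟨I, hI⟩ := M.exists_isBasis' X
  rw [hI.mrk_eq_ncard, hI.isBasis_closure_right.isBasis'.mrk_eq_ncard]

lemma Indep.ncard_le_mrk [M.RankFinite] (hI : M.Indep I) (hIX : I ⊆ X) : I.ncard ≤ mrk M X := by
  obtain ⟨K, hK, hIK⟩ := hI.subset_isBasis'_of_subset hIX
  exact hK.mrk_eq_ncard ▸ ncard_le_ncard hIK hK.indep.finite

section WeakMap

variable [A.RankFinite] [B.RankFinite] (hweak : ∀ I : Set α, B.Indep I → A.Indep I)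
include hweak

lemma mrk_le_mrk_of_forall_indep (X : Set α) : mrk B X ≤ mrk A X := by
  obtain ⟨I, hI⟩ := B.exists_isBasis' X
  exact hI.mrk_eq_ncard ▸ (hweak I hI.indep).ncard_le_mrk hI.subset

lemma IsBasis'.isBasis'_of_mrk_eq (hI : B.IsBasis' I X) (hX : mrk B X = mrk A X) :
    A.IsBasis' I X := by
  obtain ⟨K, hK, hIK⟩ := (hweak I hI.indep).subset_isBasis'_of_subset hI.subset
  have hKI : K.ncard ≤ I.ncard := by rw [← hK.mrk_eq_ncard, ← hX, hI.mrk_eq_ncard]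
  rwa [eq_of_subset_of_ncard_le hIK hKI hK.indep.finite]

lemma IsBasis'.mrk_eq_of_indep (hI : A.IsBasis' I X) (hIB : B.Indep I) : mrk B X = mrk A X :=
  (mrk_le_mrk_of_forall_indep hweak X).antisymm (hI.mrk_eq_ncard ▸ hIB.ncard_le_mrk hI.subset)

end WeakMap

end Matroid

open Matroid in
theorem stmt16_general {α : Type*} (A B : Matroid α) [A.Finite] [B.Finite]
    (hweak : ∀ I : Set α, B.Indep I → A.Indep I)
    (F F' : Set α)
    (hF : A.IsFlat F ∧ mrk B (B.closure F) = mrk A F)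
    (hF' : A.IsFlat F' ∧ mrk B (B.closure F') = mrk A F')
    (hss : F ⊂ F') (hgap : mrk A F + 1 < mrk A F') :
    ∃ G : Set α, (A.IsFlat G ∧ mrk B (B.closure G) = mrk A G) ∧
      F ⊂ G ∧ G ⊂ F' ∧ mrk A G = mrk A F + 1 := by
  obtain ⟨hFflat, hFrk⟩ := hF
  obtain ⟨hF'flat, hF'rk⟩ := hF'
  rw [mrk_closure] at hFrk hF'rk
  obtain ⟨I, hI⟩ := B.exists_isBasis' F
  obtain ⟨J, hJ, hIJ⟩ := hI.indep.subset_isBasis'_of_subset (hI.subset.trans hss.subset)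
  have hIA : A.IsBasis I F := (hI.isBasis'_of_mrk_eq hweak hFrk).isBasis hFflat.subset_ground
  obtain ⟨x, hxJ, hxI⟩ : ∃ x, x ∈ J ∧ x ∉ I := by
    refine exists_mem_notMem_of_ncard_lt_ncard ?_ hI.indep.finite
    rw [← hI.mrk_eq_ncard, ← hJ.mrk_eq_ncard, hFrk, hF'rk]
    omega
  have hxIB : B.Indep (insert x I) := hJ.indep.subset (insert_subset hxJ hIJ)
  set G := A.closure (insert x F)
  have hG : A.IsBasis (insert x I) G :=
    (hIA.insert_isBasis_insert (hweak _ hxIB)).isBasis'.isBasis_closure_right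
  have hGrk : mrk A G = mrk A F + 1 := by
    rw [hG.isBasis'.mrk_eq_ncard, ncard_insert_of_notMem hxI hI.indep.finite,
      hIA.isBasis'.mrk_eq_ncard]
  have hFG : F ⊆ G := hFflat.closure ▸ A.closure_subset_closure (subset_insert x F)
  have hGF' : G ⊆ F' :=
    hF'flat.closure ▸ A.closure_subset_closure (insert_subset (hJ.subset hxJ) hss.subset)
  refine ⟨G, ⟨A.isFlat_closure _, ?_⟩, hFG.ssubset_of_ne ?_, hGF'.ssubset_of_ne ?_, hGrk⟩
  · rw [mrk_closure]
    exact hG.isBasis'.mrk_eq_of_indep hweak hxIB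
  all_goals
    intro h
    rw [h] at hGrk
    omega

/-- Let `A → B` be a rank-preserving weak map, and let the
auxiliary pseudo-matroid `A'` consist of the flats `F` of `A` with
`rk_B(φ_B(F)) = rk_A(F)`. Then `F(A')`, ordered by inclusion, is graded by
`rk_A`: if `F ⊊ F'` in `F(A')` with `rk_A(F') > rk_A(F) + 1`, then some
`G ∈ F(A')` satisfies `F ⊊ G ⊊ F'` with `rk_A(G) = rk_A(F) + 1`. -/
theorem stmt16 {α : Type*} (A B : Matroid α) [A.Finite] [B.Finite]
    (hE : A.E = B.E) (hweak : ∀ I : Set α, B.Indep I → A.Indep I)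
    (hrk : mrk A A.E = mrk B B.E)
    (F F' : Set α)
    (hF : A.IsFlat F ∧ mrk B (B.closure F) = mrk A F)
    (hF' : A.IsFlat F' ∧ mrk B (B.closure F') = mrk A F')
    (hss : F ⊂ F') (hgap : mrk A F + 1 < mrk A F') :
    ∃ G : Set α, (A.IsFlat G ∧ mrk B (B.closure G) = mrk A G) ∧
      F ⊂ G ∧ G ⊂ F' ∧ mrk A G = mrk A F + 1 :=
  stmt16_general A B hweak F F' hF hF' hss hgap
end
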